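/- Let X be a nonempty compact subset of Euclidean space ℝ^m (with the induced metric), let M be a compact topological space, let f : X → M and g : M → X be continuous maps, and let δ > 0. Suppose there is a continuous homotopy H : X × [0,1] → X with H(x,0) = g(f(x)) and H(x,1) = x for all x ∈ X, such that for every x ∈ X the track H({x} × [0,1]) has diameter < δ (i.e., g∘f is δ-homotopic to the identity of X). Let δ' > 0 and let j : M → ℝ^m be a continuous injection such that dist(j(m), g(m)) < δ' for every m ∈ M. Equip M with the metric induced by j, i.e., d_M(m, m') = dist(j(m), j(m')). Then the Gromov–Hausdorff distance between the compact metric spaces X and M satisfies d_G(X, M) < δ + δ'. -/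
import Mathlib


/-- Let X be a nonempty compact subset of ℝ^m, M a compact space,
f : X → M and g : M → X continuous, and suppose g∘f is δ-homotopic to id_X (there is a
homotopy H with H(x,0) = g(f(x)), H(x,1) = x, all of whose tracks have diameter < δ).
Let j : M → ℝ^m be a continuous injection with dist(j(u), g(u)) < δ' for all u, and
equip M with the metric induced by j, i.e. dist(u,v) = dist(j(u), j(v)).  Then the
Gromov–Hausdorff distance between X and M is < δ + δ'. -/
theorem stmt_2 {m : ℕ} (X : Set (EuclideanSpace ℝ (Fin m)))
    (hXc : IsCompact X) (hXne : X.Nonempty)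
    (M : Type) [MetricSpace M] [CompactSpace M] [Nonempty M]
    (f : X → M) (hf : Continuous f)
    (g : M → X) (hg : Continuous g)
    (δ : ℝ) (hδ : 0 < δ)
    (H : X × unitInterval → X) (Hcont : Continuous H)
    (H0 : ∀ x : X, H (x, 0) = g (f x)) (H1 : ∀ x : X, H (x, 1) = x)
    (Htrack : ∀ x : X,
      Metric.diam (Subtype.val '' (Set.range fun t : unitInterval => H (x, t))) < δ)
    (δ' : ℝ) (hδ' : 0 < δ')
    (j : M → EuclideanSpace ℝ (Fin m)) (hjc : Continuous j) (hji : Function.Injective j)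
    -- the metric on M is the one induced by j:
    (hjiso : ∀ u v : M, dist (j u) (j v) = dist u v)
    (hjg : ∀ u : M, dist (j u) (g u : EuclideanSpace ℝ (Fin m)) < δ') :
    haveI : Nonempty X := hXne.to_subtype
    haveI : CompactSpace X := isCompact_iff_compactSpace.mp hXc
    GromovHausdorff.ghDist X M < δ + δ' := by
  haveI : Nonempty X := hXne.to_subtype
  haveI : CompactSpace X := isCompact_iff_compactSpace.mp hXc
  -- distance from x to j (f x) is < δ + δ'
  have key : ∀ x : X, dist (x : EuclideanSpace ℝ (Fin m)) (j (f x)) < δ + δ' := by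
    intro x
    have hb : Bornology.IsBounded
        (Subtype.val '' (Set.range fun t : unitInterval => H (x, t))) := by
      have hc : IsCompact (Set.range fun t : unitInterval => H (x, t)) :=
        isCompact_range (Hcont.comp (continuous_const.prodMk continuous_id))
      exact (hc.image continuous_subtype_val).isBounded
    have h1 : (x : EuclideanSpace ℝ (Fin m)) ∈
        Subtype.val '' (Set.range fun t : unitInterval => H (x, t)) :=
      ⟨H (x, 1), ⟨1, rfl⟩, by rw [H1]⟩
    have h0 : ((g (f x) : X) : EuclideanSpace ℝ (Fin m)) ∈
        Subtype.val '' (Set.range fun t : unitInterval => H (x, t)) :=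
      ⟨H (x, 0), ⟨0, rfl⟩, by rw [H0]⟩
    have hd : dist (x : EuclideanSpace ℝ (Fin m)) ((g (f x) : X) : EuclideanSpace ℝ (Fin m)) < δ :=
      lt_of_le_of_lt (Metric.dist_le_diam_of_mem hb h1 h0) (Htrack x)
    calc dist (x : EuclideanSpace ℝ (Fin m)) (j (f x))
        ≤ dist (x : EuclideanSpace ℝ (Fin m)) ((g (f x) : X) : EuclideanSpace ℝ (Fin m))
          + dist ((g (f x) : X) : EuclideanSpace ℝ (Fin m)) (j (f x)) := dist_triangle _ _ _
      _ < δ + δ' := by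
          have := hjg (f x)
          rw [dist_comm] at this
          linarith
  -- choose attained maxima
  obtain ⟨x0, -, hx0⟩ := isCompact_univ.exists_isMaxOn Set.univ_nonempty
    (Continuous.continuousOn (by continuity :
      Continuous fun x : X => dist (x : EuclideanSpace ℝ (Fin m)) (j (f x))))
  obtain ⟨u0, -, hu0⟩ := isCompact_univ.exists_isMaxOn Set.univ_nonempty
    (Continuous.continuousOn (by continuity :
      Continuous fun u : M => dist (j u) ((g u : X) : EuclideanSpace ℝ (Fin m))))
  set r : ℝ := max (dist (x0 : EuclideanSpace ℝ (Fin m)) (j (f x0)))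
      (dist (j u0) ((g u0 : X) : EuclideanSpace ℝ (Fin m))) with hr
  have hrlt : r < δ + δ' := by
    apply max_lt (key x0)
    have := hjg u0
    linarith
  have hIj : Isometry j := Isometry.of_dist_eq hjiso
  have hIv : Isometry (Subtype.val : X → EuclideanSpace ℝ (Fin m)) := isometry_subtype_coe
  have hle : GromovHausdorff.ghDist X M ≤
      Metric.hausdorffDist (Set.range (Subtype.val : X → EuclideanSpace ℝ (Fin m)))
        (Set.range j) := GromovHausdorff.ghDist_le_hausdorffDist hIv hIj
  refine lt_of_le_of_lt (le_trans hle ?_) hrlt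
  apply Metric.hausdorffDist_le_of_mem_dist (le_max_of_le_left dist_nonneg)
  · rintro _ ⟨x, rfl⟩
    exact ⟨j (f x), ⟨f x, rfl⟩, le_max_of_le_left (hx0 (Set.mem_univ x))⟩
  · rintro _ ⟨u, rfl⟩
    exact ⟨(g u : EuclideanSpace ℝ (Fin m)), ⟨g u, rfl⟩,
      le_max_of_le_right (hu0 (Set.mem_univ u))⟩
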